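/- arXiv:1709.01433 — 10 statements merged into one kernel-verified Lean document; each statement's English description precedes it below -/
import Mathlib

section
/- Let T ⊆ V with w(T) > W_U. Then for every feasible partition π of V, E_π(T) ≤ (|T|−1)(|T|−2)/2. -/
/-!
Since the weights are positive and `w(T) > W_U ≥ w(V_c)`, no part contains all of `T`, so the
numbers `a_c = |V_c ∩ T|` are all smaller than `|T|` and add up to at most `|T|`. Splitting off
one nonzero `a_c`, superadditivity of `binom(·, 2)` bounds the rest by `binom(|T| - a_c, 2)`,
and `binom(a, 2) + binom(b, 2) ≤ binom(a + b - 1, 2)` for `a, b ≥ 1` finishes: the extreme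
split of `T` is into `|T| - 1` and `1`.
-/

/-- A feasible partition of the node set `V` into `k` parts: every part is nonempty,
parts are pairwise disjoint, their union is `V`, the sizes of any two parts differ by
at most one, and the weight of every part lies between `WL` and `WU`. -/
def IsFeasiblePartition {α : Type*} [DecidableEq α] (V : Finset α) (w : α → ℝ)
    (k : ℕ) (WL WU : ℝ) (P : Fin k → Finset α) : Prop :=
  (∀ c, (P c).Nonempty) ∧
  (∀ c c', c ≠ c' → Disjoint (P c) (P c')) ∧
  Finset.univ.biUnion P = V ∧
  (∀ c c', (P c).card ≤ (P c').card + 1) ∧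
  (∀ c, WL ≤ ∑ v ∈ P c, w v ∧ ∑ v ∈ P c, w v ≤ WU)

open Finset

namespace Nat

theorem choose_two_add (a b : ℕ) : (a + b).choose 2 = a.choose 2 + b.choose 2 + a * b := by
  induction b with
  | zero => simp
  | succ b ih =>
    rw [← add_assoc, choose_succ_succ', ih, choose_succ_succ']
    simp only [choose_one_right]
    ring

theorem choose_two_add_choose_two_le {a b : ℕ} (ha : 1 ≤ a) (hb : 1 ≤ b) :
    a.choose 2 + b.choose 2 ≤ (a + b - 1).choose 2 := by
  obtain ⟨c, rfl⟩ : ∃ c, b = c + 1 := ⟨b - 1, by omega⟩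
  have hc : (c + 1).choose 2 = c.choose 2 + c := by
    rw [choose_succ_succ' c 1, choose_one_right, add_comm]
  rw [hc, show a + (c + 1) - 1 = a + c by omega, choose_two_add]
  have : c ≤ a * c := Nat.le_mul_of_pos_left c ha
  omega

end Nat

namespace Finset

theorem sum_choose_two_le_choose_two_sum {ι : Type*} (s : Finset ι) (f : ι → ℕ) :
    ∑ i ∈ s, (f i).choose 2 ≤ (∑ i ∈ s, f i).choose 2 := by
  induction s using Finset.cons_induction with
  | empty => simp
  | cons a s ha ih =>
    rw [sum_cons, sum_cons, Nat.choose_two_add]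
    omega

theorem sum_choose_two_le_of_lt {ι : Type*} [DecidableEq ι] {s : Finset ι} {f : ι → ℕ} {n : ℕ}
    (hsum : ∑ i ∈ s, f i ≤ n) (hlt : ∀ i ∈ s, f i < n) :
    ∑ i ∈ s, (f i).choose 2 ≤ (n - 1).choose 2 := by
  by_cases hzero : ∀ i ∈ s, f i = 0
  · have hchoose : ∀ i ∈ s, (f i).choose 2 = 0 := fun i hi => by rw [hzero i hi]; rfl
    rw [sum_eq_zero hchoose]
    exact Nat.zero_le _
  push Not at hzero
  obtain ⟨i, hi, hfi⟩ := hzero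
  have hrest : ∑ j ∈ s.erase i, f j ≤ n - f i := by
    have := add_sum_erase s f hi
    omega
  have hfin := hlt i hi
  rw [← add_sum_erase s _ hi]
  calc (f i).choose 2 + ∑ j ∈ s.erase i, (f j).choose 2
      ≤ (f i).choose 2 + (n - f i).choose 2 :=
        Nat.add_le_add_left ((sum_choose_two_le_choose_two_sum _ _).trans
          (Nat.choose_le_choose 2 hrest)) _
    _ ≤ (f i + (n - f i) - 1).choose 2 := Nat.choose_two_add_choose_two_le (by omega) (by omega)
    _ = (n - 1).choose 2 := by rw [Nat.add_sub_cancel' hfin.le]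

theorem sum_card_inter_le_of_pairwiseDisjoint {ι α : Type*} [DecidableEq α] {s : Finset ι}
    {P : ι → Finset α} (hP : (s : Set ι).PairwiseDisjoint P) (T : Finset α) :
    ∑ i ∈ s, #(P i ∩ T) ≤ #T := by
  rw [← card_biUnion (hP.mono_on fun i _ => inter_subset_left)]
  exact card_le_card (biUnion_subset.2 fun i _ => inter_subset_right)

theorem card_inter_lt_card_of_sum_lt {α : Type*} [DecidableEq α] {w : α → ℝ} {S T : Finset α}
    (hw : ∀ v ∈ S, 0 ≤ w v) (hST : ∑ v ∈ S, w v < ∑ v ∈ T, w v) : #(S ∩ T) < #T := by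
  refine card_lt_card (ssubset_iff_subset_ne.2 ⟨inter_subset_right, fun hST_eq => ?_⟩)
  have hTS : T ⊆ S := inter_eq_right.1 hST_eq
  exact (sum_le_sum_of_subset_of_nonneg hTS fun v hv _ => hw v hv).not_gt hST

end Finset

namespace IsFeasiblePartition

variable {α : Type*} [DecidableEq α] {V : Finset α} {w : α → ℝ} {k : ℕ} {WL WU : ℝ}
  {P : Fin k → Finset α}

theorem pairwiseDisjoint (hP : IsFeasiblePartition V w k WL WU P) :
    ((univ : Finset (Fin k)) : Set (Fin k)).PairwiseDisjoint P :=
  fun c _ c' _ h => hP.2.1 c c' h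

theorem subset (hP : IsFeasiblePartition V w k WL WU P) (c : Fin k) : P c ⊆ V :=
  hP.2.2.1 ▸ subset_biUnion_of_mem P (mem_univ c)

theorem sum_le (hP : IsFeasiblePartition V w k WL WU P) (c : Fin k) : ∑ v ∈ P c, w v ≤ WU :=
  (hP.2.2.2.2 c).2

end IsFeasiblePartition

theorem stmt_1_general {α : Type*} [DecidableEq α] (V : Finset α) (w : α → ℝ)
    (k : ℕ) (WL WU : ℝ)
    (hw : ∀ v ∈ V, 0 < w v)
    (T : Finset α) (hwT : WU < ∑ v ∈ T, w v)
    (P : Fin k → Finset α)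
    (hfeas : IsFeasiblePartition V w k WL WU P) :
    ∑ c : Fin k, ((P c ∩ T).card.choose 2) ≤ (T.card - 1) * (T.card - 2) / 2 := by
  have hE : ∑ c : Fin k, (#(P c ∩ T)).choose 2 ≤ (#T - 1).choose 2 :=
    sum_choose_two_le_of_lt (sum_card_inter_le_of_pairwiseDisjoint hfeas.pairwiseDisjoint T)
      fun c _ => card_inter_lt_card_of_sum_lt (fun v hv => (hw v (hfeas.subset c hv)).le)
        ((hfeas.sum_le c).trans_lt hwT)
  rwa [Nat.choose_two_right, Nat.sub_sub] at hE

/-- if `T ⊆ V` has `w(T) > W_U`, then for every feasible partition `π`,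
`E_π(T) ≤ (|T|-1)(|T|-2)/2`, where `E_π(T)` counts the unordered pairs of distinct
elements of `T` lying in a common part. -/
theorem stmt_1 {α : Type*} [DecidableEq α] (V : Finset α) (w : α → ℝ)
    (k : ℕ) (WL WU : ℝ)
    (hw : ∀ v ∈ V, 0 < w v) (hk : 2 ≤ k) (hWLU : 0 ≤ WL) (hWL : WL ≤ WU)
    (T : Finset α) (hT : T ⊆ V) (hwT : WU < ∑ v ∈ T, w v)
    (P : Fin k → Finset α)
    (hfeas : IsFeasiblePartition V w k WL WU P) :
    ∑ c : Fin k, ((P c ∩ T).card.choose 2) ≤ (T.card - 1) * (T.card - 2) / 2 :=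
  stmt_1_general V w k WL WU hw T hwT P hfeas
end

section
/- Let T ⊆ V with w(T) > W_L and |T| ≤ F_L, and set r = w(T) − W_L. Then for every i ∈ T and every feasible partition π of V, if V_c denotes the part of π containing i, it holds that w_i + Σ_{j ∈ (T∖{i}) ∩ V_c} w_j + Σ_{j ∈ (V∖T) ∩ V_c} (w_j + r) ≥ w(T). -/
/-- validity of the `(T,i)`-Weight-Lowerbound inequality:
if `T ⊆ V`, `w(T) > W_L`, `|T| ≤ F_L = ⌊n/k⌋` and `r = w(T) - W_L`, then for every
`i ∈ T` and every feasible partition, writing `V_c` for the part containing `i`,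
`w_i + Σ_{j ∈ (T∖{i}) ∩ V_c} w_j + Σ_{j ∈ (V∖T) ∩ V_c} (w_j + r) ≥ w(T)`. -/
theorem stmt_3 {α : Type*} [DecidableEq α] (V : Finset α) (w : α → ℝ)
    (k : ℕ) (WL WU : ℝ)
    (hw : ∀ v ∈ V, 0 < w v) (hk : 2 ≤ k) (hWLU : 0 ≤ WL) (hWL : WL ≤ WU)
    (T : Finset α) (hT : T ⊆ V) (hwT : WL < ∑ v ∈ T, w v)
    (hTcard : T.card ≤ V.card / k)
    (P : Fin k → Finset α)
    (hfeas : IsFeasiblePartition V w k WL WU P)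
    (i : α) (hi : i ∈ T) (c : Fin k) (hic : i ∈ P c) :
    ∑ v ∈ T, w v ≤
      w i + ∑ j ∈ (T.erase i) ∩ P c, w j
        + ∑ j ∈ (V \ T) ∩ P c, (w j + ((∑ v ∈ T, w v) - WL)) := by
  obtain ⟨hne, hdisj, hunion, hcard, hWbound⟩ := hfeas
  have hr : 0 < (∑ v ∈ T, w v) - WL := by linarith
  have hPcV : P c ⊆ V := by
    rw [← hunion]; exact Finset.subset_biUnion_of_mem P (Finset.mem_univ c)
  by_cases hcase : ((V \ T) ∩ P c).Nonempty
  · -- there is a node of the part outside T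
    have h2 : P c \ T = (V \ T) ∩ P c := by
      ext x
      simp only [Finset.mem_sdiff, Finset.mem_inter]
      constructor
      · rintro ⟨hx, hxT⟩; exact ⟨⟨hPcV hx, hxT⟩, hx⟩
      · rintro ⟨⟨_, hxT⟩, hx⟩; exact ⟨hx, hxT⟩
    have h1 : ∑ j ∈ P c ∩ T, w j + ∑ j ∈ (V \ T) ∩ P c, w j = ∑ j ∈ P c, w j := by
      rw [← h2]; exact Finset.sum_inter_add_sum_sdiff _ _ _
    have h3 : ∑ j ∈ P c ∩ T, w j = w i + ∑ j ∈ (T.erase i) ∩ P c, w j := by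
      have hie : (P c ∩ T).erase i = (T.erase i) ∩ P c := by
        ext x
        simp only [Finset.mem_erase, Finset.mem_inter]
        tauto
      rw [← hie, Finset.add_sum_erase _ _ (Finset.mem_inter.2 ⟨hic, hi⟩)]
    have h4 : ∑ j ∈ (V \ T) ∩ P c, (w j + ((∑ v ∈ T, w v) - WL))
        = ∑ j ∈ (V \ T) ∩ P c, w j
          + ((V \ T) ∩ P c).card * ((∑ v ∈ T, w v) - WL) := by
      rw [Finset.sum_add_distrib, Finset.sum_const, nsmul_eq_mul]
    have hc1 : (1 : ℝ) ≤ ((V \ T) ∩ P c).card := by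
      have := Finset.card_pos.2 hcase
      exact_mod_cast this
    have hcr : (∑ v ∈ T, w v) - WL
        ≤ ((V \ T) ∩ P c).card * ((∑ v ∈ T, w v) - WL) :=
      le_mul_of_one_le_left hr.le hc1
    have hWLc : WL ≤ ∑ j ∈ P c, w j := (hWbound c).1
    linarith
  · -- the part is contained in T, hence equals T
    have hempty : (V \ T) ∩ P c = ∅ := Finset.not_nonempty_iff_eq_empty.1 hcase
    have hPT : P c ⊆ T := by
      intro x hx
      by_contra hxT
      have : x ∈ (V \ T) ∩ P c :=
        Finset.mem_inter.2 ⟨Finset.mem_sdiff.2 ⟨hPcV hx, hxT⟩, hx⟩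
      simp [hempty] at this
    have hsum : ∑ c', (P c').card = V.card := by
      rw [← hunion]
      exact (Finset.card_biUnion (fun a _ b _ hab => hdisj a b hab)).symm
    have hge : V.card / k ≤ (P c).card := by
      by_contra h
      push_neg at h
      have h1 : (P c).card + 1 ≤ V.card / k := h
      have h2 : k * ((P c).card + 1) ≤ V.card :=
        le_trans (Nat.mul_le_mul_left k h1) (Nat.mul_div_le _ _)
      have h3 : ∑ c', (P c').card < ∑ _c' : Fin k, ((P c).card + 1) := by
        apply Finset.sum_lt_sum
        · intro c' _; exact hcard c' c
        · refine ⟨c, Finset.mem_univ c, ?_⟩; omega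
      rw [Finset.sum_const, Finset.card_univ, Fintype.card_fin, smul_eq_mul] at h3
      omega
    have heq : P c = T :=
      Finset.eq_of_subset_of_card_le hPT (le_trans hTcard hge)
    have hTi : (T.erase i) ∩ P c = T.erase i := by
      rw [heq]; exact Finset.inter_eq_left.2 (Finset.erase_subset _ _)
    rw [hempty, hTi, Finset.sum_empty, Finset.add_sum_erase _ _ hi, add_zero]
end

section
/- Let T ⊆ V with w(T) < W_U, set r = W_U − w(T) and S = {j ∈ V∖T : w_j > r}, and suppose S ≠ ∅. Then for every i ∈ T and every feasible partition π of V, if V_c denotes the part of π containing i, it holds that w_i + Σ_{j ∈ (T∖{i}) ∩ V_c} w_j + Σ_{j ∈ S ∩ V_c} (w_j − r) ≤ w(T). -/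
/-- validity of the `(T,i)`-Weight-Upperbound inequality:
if `T ⊆ V`, `w(T) < W_U`, `r = W_U - w(T)` and `S = {j ∈ V∖T : w_j > r} ≠ ∅`, then
for every `i ∈ T` and every feasible partition, writing `V_c` for the part
containing `i`, `w_i + Σ_{j ∈ (T∖{i}) ∩ V_c} w_j + Σ_{j ∈ S ∩ V_c} (w_j − r) ≤ w(T)`. -/
theorem stmt_4 {α : Type*} [DecidableEq α] (V : Finset α) (w : α → ℝ)
    (k : ℕ) (WL WU : ℝ)
    (hw : ∀ v ∈ V, 0 < w v) (hk : 2 ≤ k) (hWLU : 0 ≤ WL) (hWL : WL ≤ WU)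
    (T : Finset α) (hT : T ⊆ V) (hwT : ∑ v ∈ T, w v < WU)
    (r : ℝ) (hr : r = WU - ∑ v ∈ T, w v)
    (S : Finset α) (hS : S = (V \ T).filter (fun j => r < w j)) (hSne : S.Nonempty)
    (P : Fin k → Finset α)
    (hfeas : IsFeasiblePartition V w k WL WU P)
    (i : α) (hi : i ∈ T) (c : Fin k) (hic : i ∈ P c) :
    w i + ∑ j ∈ (T.erase i) ∩ P c, w j + ∑ j ∈ S ∩ P c, (w j - r)
      ≤ ∑ v ∈ T, w v := by
  obtain ⟨hne, hdisj, hunion, hcard, hW⟩ := hfeas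
  have hPc : P c ⊆ V := by
    rw [← hunion]; exact Finset.subset_biUnion_of_mem P (Finset.mem_univ c)
  have hr0 : 0 < r := by rw [hr]; linarith
  have h1 : w i + ∑ j ∈ (T.erase i) ∩ P c, w j = ∑ j ∈ T ∩ P c, w j := by
    rw [Finset.erase_inter,
      Finset.add_sum_erase _ _ (Finset.mem_inter.mpr ⟨hi, hic⟩)]
  have hTPc : ∑ j ∈ T ∩ P c, w j ≤ ∑ v ∈ T, w v := by
    apply Finset.sum_le_sum_of_subset_of_nonneg Finset.inter_subset_left
    intro j hj _
    exact (hw j (hT hj)).le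
  rw [h1]
  rcases (S ∩ P c).eq_empty_or_nonempty with he | hne'
  · rw [he, Finset.sum_empty]; linarith
  · have hdisj2 : Disjoint (T ∩ P c) (S ∩ P c) := by
      apply Finset.disjoint_left.mpr
      intro a ha hb
      have haS : a ∈ S := (Finset.mem_inter.mp hb).1
      rw [hS] at haS
      exact (Finset.mem_sdiff.mp (Finset.mem_filter.mp haS).1).2
        (Finset.mem_inter.mp ha).1
    have hsub : (T ∩ P c) ∪ (S ∩ P c) ⊆ P c := by
      apply Finset.union_subset Finset.inter_subset_right Finset.inter_subset_right
    have hsum : ∑ j ∈ T ∩ P c, w j + ∑ j ∈ S ∩ P c, w j ≤ ∑ v ∈ P c, w v := by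
      rw [← Finset.sum_union hdisj2]
      apply Finset.sum_le_sum_of_subset_of_nonneg hsub
      intro j hj _
      exact (hw j (hPc hj)).le
    have hWU : ∑ v ∈ P c, w v ≤ WU := (hW c).2
    have hcard1 : 1 ≤ ((S ∩ P c).card : ℝ) := by
      exact_mod_cast Finset.card_pos.mpr hne'
    have hS2 : ∑ j ∈ S ∩ P c, (w j - r)
        = ∑ j ∈ S ∩ P c, w j - ((S ∩ P c).card : ℝ) * r := by
      rw [Finset.sum_sub_distrib, Finset.sum_const, nsmul_eq_mul]
    nlinarith
end

section
/- Let T ⊆ V with w(T) > W_U. If some feasible partition π of V satisfies E_π(T) = (|T|−1)(|T|−2)/2, then there exists l ∈ T such that w(T∖{l}) ≤ W_U. -/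
lemma two_mul_choose_two (n : ℕ) : 2 * n.choose 2 = n * (n - 1) := by
  induction n with
  | zero => rfl
  | succ m ih =>
    rw [Nat.choose_succ_succ, Nat.choose_one_right, Nat.mul_add, ih]
    cases m with
    | zero => rfl
    | succ j => simp only [Nat.succ_sub_one]; ring

/-- if `T ⊆ V` has `w(T) > W_U` and a feasible partition `π` attains
`E_π(T) = (|T|−1)(|T|−2)/2`, then there exists `l ∈ T` with `w(T∖{l}) ≤ W_U`. -/
theorem stmt_5 {α : Type*} [DecidableEq α] (V : Finset α) (w : α → ℝ)
    (k : ℕ) (WL WU : ℝ)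
    (hw : ∀ v ∈ V, 0 < w v) (hk : 2 ≤ k) (hWLU : 0 ≤ WL) (hWL : WL ≤ WU)
    (T : Finset α) (hT : T ⊆ V) (hwT : WU < ∑ v ∈ T, w v)
    (P : Fin k → Finset α)
    (hfeas : IsFeasiblePartition V w k WL WU P)
    (heq : ∑ c : Fin k, ((P c ∩ T).card.choose 2)
        = (T.card - 1) * (T.card - 2) / 2) :
    ∃ l ∈ T, ∑ v ∈ T.erase l, w v ≤ WU := by
  obtain ⟨-, hdisj, hunion, -, hweight⟩ := hfeas
  have hPV : ∀ c, P c ⊆ V := by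
    intro c
    rw [← hunion]
    exact Finset.subset_biUnion_of_mem P (Finset.mem_univ c)
  set t := T.card with ht
  -- sum of intersection cards equals t
  have hsum : ∑ c : Fin k, (P c ∩ T).card = t := by
    rw [← Finset.card_biUnion (fun c _ c' _ hcc' =>
      Finset.disjoint_of_subset_left Finset.inter_subset_left
        (Finset.disjoint_of_subset_right Finset.inter_subset_left (hdisj c c' hcc')))]
    congr 1
    rw [← Finset.biUnion_inter, hunion, Finset.inter_eq_right.mpr hT]
  -- small cases
  rcases Nat.lt_or_ge t 2 with htlt | ht2
  · interval_cases t
    · exfalso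
      have hTe : T = ∅ := Finset.card_eq_zero.mp ht.symm
      rw [hTe] at hwT
      simp at hwT
      linarith
    · obtain ⟨l, hl⟩ := Finset.card_eq_one.mp ht.symm
      refine ⟨l, by simp [hl], ?_⟩
      rw [hl]
      simp
      linarith
  -- main case : some part contains ≥ t-1 elements of T
  have hex : ∃ c, t - 1 ≤ (P c ∩ T).card := by
    by_contra hcon
    push_neg at hcon
    have hle : ∀ c, (P c ∩ T).card ≤ t - 2 := fun c => by have := hcon c; omega
    have hA : ∑ c : Fin k, ((P c ∩ T).card * ((P c ∩ T).card - 1)) = (t - 1) * (t - 2) := by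
      calc ∑ c : Fin k, ((P c ∩ T).card * ((P c ∩ T).card - 1))
          = ∑ c : Fin k, 2 * ((P c ∩ T).card.choose 2) := by
            refine Finset.sum_congr rfl fun c _ => ?_
            rw [two_mul_choose_two]
        _ = 2 * ((t - 1) * (t - 2) / 2) := by rw [← Finset.mul_sum, heq]
        _ = 2 * ((t - 1).choose 2) := by
            have h12 : t - 1 - 1 = t - 2 := by omega
            rw [Nat.choose_two_right, h12]
        _ = (t - 1) * (t - 2) := by
            have h12 : t - 1 - 1 = t - 2 := by omega
            rw [two_mul_choose_two, h12]
    have hB : ∑ c : Fin k, ((P c ∩ T).card * ((P c ∩ T).card - 1)) ≤ (t - 3) * t := by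
      calc ∑ c : Fin k, ((P c ∩ T).card * ((P c ∩ T).card - 1))
          ≤ ∑ c : Fin k, ((P c ∩ T).card * (t - 3)) := by
            refine Finset.sum_le_sum fun c _ => Nat.mul_le_mul_left _ ?_
            have := hle c; omega
        _ = (t - 3) * t := by rw [← Finset.sum_mul, hsum, Nat.mul_comm]
    rcases Nat.lt_or_ge t 3 with h3 | h3
    · -- t = 2 : all intersections empty, contradicting hsum
      have : ∑ c : Fin k, (P c ∩ T).card = 0 :=
        Finset.sum_eq_zero fun c _ => by have := hle c; omega
      omega
    · obtain ⟨s, hs⟩ : ∃ s, t = s + 3 := ⟨t - 3, by omega⟩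
      rw [hA, hs] at hB
      simp only [show s + 3 - 1 = s + 2 from rfl, show s + 3 - 2 = s + 1 from rfl,
        show s + 3 - 3 = s from rfl] at hB
      nlinarith
  obtain ⟨c, hc⟩ := hex
  have hca : (P c ∩ T).card ≤ t := Finset.card_le_card Finset.inter_subset_right
  have hsub : ∀ l ∈ T, T.erase l ⊆ P c → ∑ v ∈ T.erase l, w v ≤ WU := by
    intro l hl hsubl
    refine le_trans ?_ (hweight c).2
    refine Finset.sum_le_sum_of_subset_of_nonneg hsubl fun v hv _ => ?_
    exact le_of_lt (hw v (hPV c hv))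
  by_cases hfull : (P c ∩ T).card = t
  · -- T ⊆ P c : contradiction with weight
    exfalso
    have hTP : T ⊆ P c := by
      have := Finset.eq_of_subset_of_card_le Finset.inter_subset_right (le_of_eq hfull.symm)
      rw [← this]
      exact Finset.inter_subset_left
    have : ∑ v ∈ T, w v ≤ ∑ v ∈ P c, w v :=
      Finset.sum_le_sum_of_subset_of_nonneg hTP fun v hv _ => le_of_lt (hw v (hPV c hv))
    linarith [(hweight c).2]
  · -- exactly one element of T missing from P c
    have hcard : (T \ P c).card = 1 := by
      have h1 : (T \ P c).card + (T ∩ P c).card = t := Finset.card_sdiff_add_card_inter T (P c)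
      have h2 : (T ∩ P c).card = (P c ∩ T).card := by rw [Finset.inter_comm]
      omega
    obtain ⟨l, hl⟩ := Finset.card_eq_one.mp hcard
    have hlT : l ∈ T := by
      have : l ∈ T \ P c := hl ▸ Finset.mem_singleton_self l
      exact (Finset.mem_sdiff.mp this).1
    refine ⟨l, hlT, hsub l hlT ?_⟩
    intro v hv
    obtain ⟨hvl, hvT⟩ := Finset.mem_erase.mp hv
    by_contra hvP
    have : v ∈ T \ P c := Finset.mem_sdiff.mpr ⟨hvT, hvP⟩
    rw [hl, Finset.mem_singleton] at this
    exact hvl this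
end

section
/- Let T ⊆ V with w(T) > W_L and |T| ≤ F_L, and set r = w(T) − W_L. Suppose there exist a feasible partition π of V and a node i ∈ T such that, writing V_c for the part of π containing i, equality holds: w_i + Σ_{j ∈ (T∖{i}) ∩ V_c} w_j + Σ_{j ∈ (V∖T) ∩ V_c} (w_j + r) = w(T). Then |T| ≥ F_L − 1. -/
open Finset

theorem card_biUnion_div_card_le {ι α : Type*} [Fintype ι] [DecidableEq α] {P : ι → Finset α}
    (hdisj : ∀ c c', c ≠ c' → Disjoint (P c) (P c'))
    (hbal : ∀ c c', #(P c) ≤ #(P c') + 1) (c : ι) :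
    #(univ.biUnion P) / Fintype.card ι ≤ #(P c) := by
  have hcard : #(univ.biUnion P) = ∑ c', #(P c') :=
    card_biUnion fun c' _ c'' _ h => hdisj c' c'' h
  have hlt : ∑ c', #(P c') < ∑ _c' : ι, (#(P c) + 1) :=
    sum_lt_sum (fun c' _ => hbal c' c) ⟨c, mem_univ c, Nat.lt_succ_self _⟩
  rw [sum_const, card_univ, smul_eq_mul, ← hcard] at hlt
  exact Nat.lt_succ_iff.mp <|
    (Nat.div_lt_iff_lt_mul (Fintype.card_pos_iff.mpr ⟨c⟩)).mpr (by rwa [mul_comm] at hlt)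

theorem card_le_card_add_card_sdiff_inter {α : Type*} [DecidableEq α] {S T V : Finset α}
    (hS : S ⊆ V) : #S ≤ #T + #((V \ T) ∩ S) := by
  refine (card_le_card fun x hx => ?_).trans (card_union_le T ((V \ T) ∩ S))
  by_cases hxT : x ∈ T <;> simp [hxT, hx, hS hx]

theorem add_sum_erase_inter_add_sum_sdiff_inter {α M : Type*} [DecidableEq α] [AddCommMonoid M]
    {S T V : Finset α} {i : α} (hS : S ⊆ V) (hiT : i ∈ T) (hiS : i ∈ S) (w : α → M) (r : M) :
    w i + ∑ j ∈ T.erase i ∩ S, w j + ∑ j ∈ (V \ T) ∩ S, (w j + r)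
      = ∑ j ∈ S, w j + #((V \ T) ∩ S) • r := by
  have hout : (V \ T) ∩ S = S \ T := by
    ext x
    simp only [mem_inter, mem_sdiff]
    exact ⟨fun h => ⟨h.2, h.1.2⟩, fun h => ⟨⟨hS h.1, h.2⟩, h.1⟩⟩
  rw [erase_inter, add_sum_erase _ _ (mem_inter.mpr ⟨hiT, hiS⟩), sum_add_distrib, sum_const,
    ← add_assoc, hout, inter_comm, sum_inter_add_sum_sdiff]

theorem stmt_6_general {α : Type*} [DecidableEq α] (V : Finset α) (w : α → ℝ)
    (k : ℕ) (WL WU : ℝ)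
    (T : Finset α) (hwT : WL < ∑ v ∈ T, w v)
    (P : Fin k → Finset α)
    (hfeas : IsFeasiblePartition V w k WL WU P)
    (i : α) (hi : i ∈ T) (c : Fin k) (hic : i ∈ P c)
    (heq : w i + ∑ j ∈ (T.erase i) ∩ P c, w j
        + ∑ j ∈ (V \ T) ∩ P c, (w j + ((∑ v ∈ T, w v) - WL))
        = ∑ v ∈ T, w v) :
    V.card / k - 1 ≤ T.card := by
  obtain ⟨-, hdisj, hunion, hbal, hweight⟩ := hfeas
  have hPV : P c ⊆ V := hunion ▸ subset_biUnion_of_mem P (mem_univ c)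
  rw [add_sum_erase_inter_add_sum_sdiff_inter hPV hi hic, nsmul_eq_mul] at heq
  have hout : #((V \ T) ∩ P c) ≤ 1 := by
    have hWL := (hweight c).1
    have hmul : (#((V \ T) ∩ P c) : ℝ) * (∑ v ∈ T, w v - WL) ≤ 1 * (∑ v ∈ T, w v - WL) := by
      linarith
    exact_mod_cast le_of_mul_le_mul_right hmul (sub_pos.mpr hwT)
  have hlow : #V / k ≤ #(P c) := by
    simpa [hunion] using card_biUnion_div_card_le hdisj hbal c
  have hsplit := card_le_card_add_card_sdiff_inter (T := T) hPV
  omega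

/-- if a feasible partition and a node `i ∈ T` attain equality in the
`(T,i)`-Weight-Lowerbound inequality, then `|T| ≥ F_L − 1` where `F_L = ⌊n/k⌋`. -/
theorem stmt_6 {α : Type*} [DecidableEq α] (V : Finset α) (w : α → ℝ)
    (k : ℕ) (WL WU : ℝ)
    (hw : ∀ v ∈ V, 0 < w v) (hk : 2 ≤ k) (hWLU : 0 ≤ WL) (hWL : WL ≤ WU)
    (T : Finset α) (hT : T ⊆ V) (hwT : WL < ∑ v ∈ T, w v)
    (hTcard : T.card ≤ V.card / k)
    (P : Fin k → Finset α)
    (hfeas : IsFeasiblePartition V w k WL WU P)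
    (i : α) (hi : i ∈ T) (c : Fin k) (hic : i ∈ P c)
    (heq : w i + ∑ j ∈ (T.erase i) ∩ P c, w j
        + ∑ j ∈ (V \ T) ∩ P c, (w j + ((∑ v ∈ T, w v) - WL))
        = ∑ v ∈ T, w v) :
    V.card / k - 1 ≤ T.card :=
  stmt_6_general V w k WL WU T hwT P hfeas i hi c hic heq
end

section
/- Let T ⊆ V with w(T) < W_U, set r = W_U − w(T) and S = {j ∈ V∖T : w_j > r}. Suppose there exist a feasible partition π of V and a node i ∈ T such that, writing V_c for the part of π containing i, equality holds: w_i + Σ_{j ∈ (T∖{i}) ∩ V_c} w_j + Σ_{j ∈ S ∩ V_c} (w_j − r) = w(T), and moreover S ∩ V_c ≠ ∅. Then |T| ≥ F_L − 1. -/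
/-- if a feasible partition and a node `i ∈ T` attain equality in the
`(T,i)`-Weight-Upperbound inequality with `S ∩ V_c ≠ ∅` (a root of Type 2), then
`|T| ≥ F_L − 1` where `F_L = ⌊n/k⌋`. -/
theorem stmt_8 {α : Type*} [DecidableEq α] (V : Finset α) (w : α → ℝ)
    (k : ℕ) (WL WU : ℝ)
    (hw : ∀ v ∈ V, 0 < w v) (hk : 2 ≤ k) (hWLU : 0 ≤ WL) (hWL : WL ≤ WU)
    (T : Finset α) (hT : T ⊆ V) (hwT : ∑ v ∈ T, w v < WU)
    (r : ℝ) (hr : r = WU - ∑ v ∈ T, w v)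
    (S : Finset α) (hS : S = (V \ T).filter (fun j => r < w j))
    (P : Fin k → Finset α)
    (hfeas : IsFeasiblePartition V w k WL WU P)
    (i : α) (hi : i ∈ T) (c : Fin k) (hic : i ∈ P c)
    (heq : w i + ∑ j ∈ (T.erase i) ∩ P c, w j + ∑ j ∈ S ∩ P c, (w j - r)
        = ∑ v ∈ T, w v)
    (hNonempty : (S ∩ P c).Nonempty) :
    V.card / k - 1 ≤ T.card := by

  obtain ⟨hne, hdisj, hunion, hbal, hbound⟩ := hfeas
  have hrpos : 0 < r := by rw [hr]; linarith
  set A := T ∩ P c with hA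
  set B := S ∩ P c with hBdef
  have hST : Disjoint T S := by
    rw [hS]
    exact Finset.disjoint_left.mpr (fun a ha hb =>
      (Finset.mem_sdiff.1 (Finset.mem_filter.1 hb).1).2 ha)
  have hAB : Disjoint A B :=
    hST.mono Finset.inter_subset_left Finset.inter_subset_left
  have hiA : i ∈ A := Finset.mem_inter.2 ⟨hi, hic⟩
  have hsumA : w i + ∑ j ∈ (T.erase i) ∩ P c, w j = ∑ j ∈ A, w j := by
    rw [Finset.erase_inter]
    exact Finset.add_sum_erase A w hiA
  have hBsub : ∑ j ∈ B, (w j - r) = ∑ j ∈ B, w j - B.card * r := by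
    rw [Finset.sum_sub_distrib, Finset.sum_const, nsmul_eq_mul]
  have hE : ∑ j ∈ A, w j + ∑ j ∈ B, w j - B.card * r = ∑ v ∈ T, w v := by
    have := heq
    rw [hBsub] at this
    linarith [hsumA]
  have hABsub : A ∪ B ⊆ P c :=
    Finset.union_subset Finset.inter_subset_right Finset.inter_subset_right
  set R := P c \ (A ∪ B) with hRdef
  have hsplit : ∑ v ∈ P c, w v = (∑ j ∈ A, w j + ∑ j ∈ B, w j) + ∑ v ∈ R, w v := by
    rw [← Finset.sum_union hAB, ← Finset.sum_union Finset.disjoint_sdiff,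
      Finset.union_sdiff_of_subset hABsub]
  have hPcU : ∑ v ∈ P c, w v ≤ WU := (hbound c).2
  have hRle : ∑ v ∈ R, w v ≤ r - B.card * r := by
    rw [hr] at *
    linarith
  have hPV : P c ⊆ V := by
    rw [← hunion]
    exact Finset.subset_biUnion_of_mem P (Finset.mem_univ c)
  have hRV : R ⊆ V := (Finset.sdiff_subset).trans hPV
  have hRnn : 0 ≤ ∑ v ∈ R, w v :=
    Finset.sum_nonneg (fun v hv => (hw v (hRV hv)).le)
  have hBpos : 1 ≤ B.card := Finset.card_pos.2 hNonempty
  have hB1 : B.card = 1 := by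
    by_contra h
    have h2 : 2 ≤ B.card := by omega
    have : (2 : ℝ) ≤ (B.card : ℝ) := by exact_mod_cast h2
    nlinarith
  have hRempty : R = ∅ := by
    rw [← Finset.not_nonempty_iff_eq_empty]
    intro hRne
    have : 0 < ∑ v ∈ R, w v :=
      Finset.sum_pos (fun v hv => hw v (hRV hv)) hRne
    rw [hB1] at hRle
    push_cast at hRle
    linarith
  have hPcsub : P c ⊆ A ∪ B := Finset.sdiff_eq_empty_iff_subset.1 hRempty
  have hcardPc : (P c).card ≤ T.card + 1 := by
    calc (P c).card ≤ (A ∪ B).card := Finset.card_le_card hPcsub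
      _ ≤ A.card + B.card := Finset.card_union_le A B
      _ ≤ T.card + 1 := by
          have : A.card ≤ T.card := Finset.card_le_card Finset.inter_subset_left
          omega
  have hcardV : V.card = ∑ c', (P c').card := by
    rw [← hunion, Finset.card_biUnion (fun x _ y _ h => hdisj x y h)]
  have hsum : ∑ c' : Fin k, (P c').card
      = (P c).card + ∑ c' ∈ Finset.univ.erase c, (P c').card :=
    (Finset.add_sum_erase _ _ (Finset.mem_univ c)).symm
  have hrest : ∑ c' ∈ Finset.univ.erase c, (P c').card ≤ (k - 1) * ((P c).card + 1) := by
    have h1 := Finset.sum_le_card_nsmul (Finset.univ.erase c)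
      (fun c' => (P c').card) ((P c).card + 1) (fun c' _ => hbal c' c)
    have h2 : (Finset.univ.erase c).card = k - 1 := by
      rw [Finset.card_erase_of_mem (Finset.mem_univ c), Finset.card_univ, Fintype.card_fin]
    rw [h2, smul_eq_mul] at h1
    exact h1
  have hlt : V.card < ((P c).card + 1) * k := by
    have hk1 : k - 1 + 1 = k := by omega
    have hkk : ((P c).card + 1) + (k - 1) * ((P c).card + 1) = ((P c).card + 1) * k := by
      calc ((P c).card + 1) + (k - 1) * ((P c).card + 1)
          = ((k - 1) + 1) * ((P c).card + 1) := by ring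
        _ = ((P c).card + 1) * k := by rw [hk1]; ring
    have hV : V.card ≤ (P c).card + (k - 1) * ((P c).card + 1) := by
      rw [hcardV, hsum]; omega
    calc V.card ≤ (P c).card + (k - 1) * ((P c).card + 1) := hV
      _ < ((P c).card + 1) + (k - 1) * ((P c).card + 1) :=
          Nat.add_lt_add_right (Nat.lt_succ_self _) _
      _ = ((P c).card + 1) * k := hkk
  have hdiv : V.card / k < (P c).card + 1 :=
    (Nat.div_lt_iff_lt_mul (by omega)).2 hlt
  omega
end

section
/- Let T ⊆ V with w(T) < W_U, set r = W_U − w(T) and S = {j ∈ V∖T : w_j > r}. Suppose there exist a feasible partition π of V and a node i ∈ T such that, writing V_c for the part of π containing i, equality holds: w_i + Σ_{j ∈ (T∖{i}) ∩ V_c} w_j + Σ_{j ∈ S ∩ V_c} (w_j − r) = w(T), and moreover S ∩ V_c ≠ ∅. Then w(V_c) = W_U, |S ∩ V_c| = 1, and V_c ⊆ T ∪ S. -/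
/-- if a feasible partition and a node `i ∈ T` attain equality in the
`(T,i)`-Weight-Upperbound inequality with `S ∩ V_c ≠ ∅`, then `w(V_c) = W_U`,
`|S ∩ V_c| = 1` and `V_c ⊆ T ∪ S`. -/
theorem stmt_10 {α : Type*} [DecidableEq α] (V : Finset α) (w : α → ℝ)
    (k : ℕ) (WL WU : ℝ)
    (hw : ∀ v ∈ V, 0 < w v) (hk : 2 ≤ k) (hWLU : 0 ≤ WL) (hWL : WL ≤ WU)
    (T : Finset α) (hT : T ⊆ V) (hwT : ∑ v ∈ T, w v < WU)
    (r : ℝ) (hr : r = WU - ∑ v ∈ T, w v)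
    (S : Finset α) (hS : S = (V \ T).filter (fun j => r < w j))
    (P : Fin k → Finset α)
    (hfeas : IsFeasiblePartition V w k WL WU P)
    (i : α) (hi : i ∈ T) (c : Fin k) (hic : i ∈ P c)
    (heq : w i + ∑ j ∈ (T.erase i) ∩ P c, w j + ∑ j ∈ S ∩ P c, (w j - r)
        = ∑ v ∈ T, w v)
    (hNonempty : (S ∩ P c).Nonempty) :
    ∑ v ∈ P c, w v = WU ∧ (S ∩ P c).card = 1 ∧ P c ⊆ T ∪ S := by
  obtain ⟨hne, hdisj, hunion, hcard, hbound⟩ := hfeas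
  have hPV : P c ⊆ V := by
    rw [← hunion]; exact Finset.subset_biUnion_of_mem P (Finset.mem_univ c)
  have hrpos : 0 < r := by rw [hr]; linarith
  set A : Finset α := T ∩ P c with hA
  set B : Finset α := S ∩ P c with hB
  -- S is disjoint from T
  have hST : ∀ j ∈ S, j ∈ V ∧ j ∉ T ∧ r < w j := by
    intro j hj
    rw [hS, Finset.mem_filter, Finset.mem_sdiff] at hj
    exact ⟨hj.1.1, hj.1.2, hj.2⟩
  have hAB : Disjoint A B := by
    rw [Finset.disjoint_left]
    intro a ha hb
    exact (hST a (Finset.mem_inter.mp hb).1).2.1 (Finset.mem_inter.mp ha).1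
  have hiA : i ∈ A := Finset.mem_inter.mpr ⟨hi, hic⟩
  have hAerase : A.erase i = (T.erase i) ∩ P c := by
    ext x
    simp only [Finset.mem_erase, Finset.mem_inter, hA]
    tauto
  have hsumA : w i + ∑ j ∈ (T.erase i) ∩ P c, w j = ∑ j ∈ A, w j := by
    rw [← hAerase]; exact Finset.add_sum_erase _ _ hiA
  have hsumB : ∑ j ∈ B, (w j - r) = ∑ j ∈ B, w j - (B.card : ℝ) * r := by
    rw [Finset.sum_sub_distrib, Finset.sum_const, nsmul_eq_mul]
  have heq' : ∑ j ∈ A, w j + ∑ j ∈ B, w j - (B.card : ℝ) * r = ∑ v ∈ T, w v := by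
    rw [← hsumA]; rw [hsumB] at heq; linarith
  have hABsub : A ∪ B ⊆ P c := by
    apply Finset.union_subset <;> exact Finset.inter_subset_right
  have hsumUnion : ∑ j ∈ A ∪ B, w j = ∑ j ∈ A, w j + ∑ j ∈ B, w j :=
    Finset.sum_union hAB
  have hle : ∑ j ∈ A ∪ B, w j ≤ ∑ v ∈ P c, w v := by
    apply Finset.sum_le_sum_of_subset_of_nonneg hABsub
    intro x hx _
    exact le_of_lt (hw x (hPV hx))
  have hWUb : ∑ v ∈ P c, w v ≤ WU := (hbound c).2
  have hcard1 : B.card = 1 := by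
    have hBpos : 1 ≤ B.card := Finset.card_pos.mpr hNonempty
    have : (B.card : ℝ) * r ≤ r := by
      have := hsumUnion; nlinarith [heq', hle, hWUb, hr]
    have : (B.card : ℝ) ≤ 1 := by
      by_contra h
      push_neg at h
      nlinarith
    have : B.card ≤ 1 := by exact_mod_cast this
    omega
  have hsumAB : ∑ j ∈ A ∪ B, w j = WU := by
    rw [hsumUnion]
    have : (B.card : ℝ) = 1 := by rw [hcard1]; norm_num
    rw [this] at heq'
    linarith
  have hsubset : P c ⊆ T ∪ S := by
    intro x hx
    by_contra hxTS
    rw [Finset.mem_union] at hxTS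
    push_neg at hxTS
    have hxAB : x ∉ A ∪ B := by
      rw [Finset.mem_union]
      push_neg
      constructor <;> intro h
      · exact hxTS.1 (Finset.mem_inter.mp h).1
      · exact hxTS.2 (Finset.mem_inter.mp h).1
    have hins : insert x (A ∪ B) ⊆ P c := Finset.insert_subset hx hABsub
    have : ∑ j ∈ insert x (A ∪ B), w j ≤ ∑ v ∈ P c, w v := by
      apply Finset.sum_le_sum_of_subset_of_nonneg hins
      intro y hy _
      exact le_of_lt (hw y (hPV hy))
    rw [Finset.sum_insert hxAB, hsumAB] at this
    have hwx : 0 < w x := hw x (hPV hx)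
    linarith
  have hwPc : ∑ v ∈ P c, w v = WU := le_antisymm hWUb (hsumAB ▸ hle)
  exact ⟨hwPc, hcard1, hsubset⟩
end

section
/- For positive integers n, k, k' with k ≤ n and k' ≤ n, if β_{n,k} = β_{n,k'} then k = k'. -/
/-- `beta n k = r·F_U(F_U−1)/2 + (k−r)·F_L(F_L−1)/2` where `F_L = ⌊n/k⌋`,
`F_U = ⌈n/k⌉ = (n+k-1)/k` and `r = n mod k`: the number of edges of a balanced
partition of an `n`-element set into `k` parts. -/
def beta (n k : ℕ) : ℕ :=
  (n % k) * ((n + k - 1) / k * ((n + k - 1) / k - 1) / 2)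
    + (k - n % k) * (n / k * (n / k - 1) / 2)

lemma half_cancel (a m : ℕ) : 2 * (a * (m * (m - 1) / 2)) = a * (m * (m - 1)) := by
  have h2 : 2 * (m * (m - 1) / 2) = m * (m - 1) := by
    rcases m with _ | s
    · simp
    · have h : Even ((s + 1) * (s + 1 - 1)) := by
        simp only [Nat.add_sub_cancel]
        rw [mul_comm]; exact Nat.even_mul_succ_self s
      exact Nat.mul_div_cancel' h.two_dvd
  rw [← mul_assoc, mul_comm 2 a, mul_assoc, h2]

lemma two_beta (n k : ℕ) (hk : 0 < k) (hkn : k ≤ n) :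
    2 * beta n k = n * (n / k - 1) + n % k * (n / k + 1) := by
  have hdm := Nat.div_add_mod n k
  set q := n / k with hq
  set r := n % k with hr
  clear_value q r
  have hrk : r < k := hr ▸ Nat.mod_lt _ hk
  have hq1 : 1 ≤ q := hq ▸ (Nat.one_le_div_iff hk).mpr hkn
  have hFU : (n + k - 1) / k = if r = 0 then q else q + 1 := by
    rcases Nat.eq_zero_or_pos r with h0 | h0
    · simp only [h0, if_pos]
      have : n + k - 1 = k * q + (k - 1) := by omega
      rw [this, Nat.mul_add_div hk, Nat.div_eq_of_lt (by omega), add_zero]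
    · rw [if_neg (by omega)]
      have hx : k * (q + 1) = k * q + k := by ring
      have : n + k - 1 = k * (q + 1) + (r - 1) := by omega
      rw [this, Nat.mul_add_div hk, Nat.div_eq_of_lt (by omega), add_zero]
  unfold beta
  rw [← hq, ← hr, hFU]
  rcases Nat.eq_zero_or_pos r with h0 | h0
  · simp only [h0, if_pos, zero_mul, zero_add, Nat.sub_zero, Nat.mul_add, add_zero]
    rw [half_cancel]
    obtain ⟨s, rfl⟩ : ∃ s, q = s + 1 := ⟨q - 1, by omega⟩
    have hn : n = k * (s + 1) := by omega
    simp only [Nat.add_sub_cancel, hn]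
    ring
  · rw [if_neg (by omega), Nat.mul_add, half_cancel, half_cancel]
    obtain ⟨s, rfl⟩ : ∃ s, q = s + 1 := ⟨q - 1, by omega⟩
    obtain ⟨t, hkrt⟩ : ∃ t, k = r + (t + 1) := ⟨k - r - 1, by omega⟩
    obtain ⟨r₀, rfl⟩ : ∃ r₀, r = r₀ + 1 := ⟨r - 1, by omega⟩
    have hn : n = k * (s + 1) + (r₀ + 1) := by omega
    simp only [Nat.add_sub_cancel, hkrt, Nat.add_sub_cancel_left, hn]
    ring

lemma beta_succ_lt (n k : ℕ) (hk : 0 < k) (h : k + 1 ≤ n) :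
    beta n (k + 1) < beta n k := by
  have h1 := two_beta n k hk (by omega)
  have h2 := two_beta n (k + 1) (by omega) h
  have hdm1 := Nat.div_add_mod n k
  have hdm2 := Nat.div_add_mod n (k + 1)
  have hq1 : 1 ≤ n / (k + 1) := (Nat.one_le_div_iff (by omega)).mpr h
  have hqq : n / (k + 1) ≤ n / k := Nat.div_le_div_left (by omega) hk
  have hrk : n % k < k := Nat.mod_lt _ hk
  have hrk' : n % (k + 1) < k + 1 := Nat.mod_lt _ (by omega)
  set q := n / k with hqd
  set r := n % k with hrd
  set q' := n / (k + 1) with hqd'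
  set r' := n % (k + 1) with hrd'
  clear_value q r q' r'
  have key : n * (q' - 1) + r' * (q' + 1) < n * (q - 1) + r * (q + 1) := by
    zify [le_trans hq1 hqq, hq1]
    have hn1 : (k : ℤ) * q + r = n := by exact_mod_cast hdm1
    have hn2 : ((k : ℤ) + 1) * q' + r' = n := by exact_mod_cast hdm2
    rcases eq_or_lt_of_le hqq with heq | hlt
    · subst heq
      nlinarith [hq1]
    · nlinarith [mul_nonneg (by omega : (0:ℤ) ≤ (q:ℤ) - q' - 1) (by positivity : (0:ℤ) ≤ (n:ℤ)),
        mul_nonneg (by positivity : (0:ℤ) ≤ (r:ℤ)) (by positivity : (0:ℤ) ≤ (q:ℤ) + 1),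
        mul_le_mul_of_nonneg_left (by omega : (1:ℤ) ≤ (k:ℤ) + 1 - r') (by positivity : (0:ℤ) ≤ (q':ℤ))]
  omega

lemma beta_lt (n k k' : ℕ) (hk : 0 < k) (hlt : k < k') (hk'n : k' ≤ n) :
    beta n k' < beta n k := by
  induction k' with
  | zero => omega
  | succ m ih =>
    rcases Nat.lt_or_ge k m with h | h
    · exact lt_trans (beta_succ_lt n m (by omega) hk'n) (ih h (by omega))
    · have : k = m := by omega
      subst this
      exact beta_succ_lt n k hk hk'n

/-- for positive integers `n, k, k'` with `k ≤ n` and `k' ≤ n`,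
`β_{n,k} = β_{n,k'}` implies `k = k'`. -/
theorem stmt_11 (n k k' : ℕ) (hn : 0 < n) (hk : 0 < k) (hk' : 0 < k')
    (hkn : k ≤ n) (hk'n : k' ≤ n) (h : beta n k = beta n k') :
    k = k' := by
  rcases lt_trichotomy k k' with hlt | heq | hlt
  · exact absurd h (Nat.ne_of_gt (beta_lt n k k' hk hlt hk'n))
  · exact heq
  · exact absurd h (Nat.ne_of_lt (beta_lt n k' k hk' hlt hkn))
end

section
/- Let 1 ≤ k ≤ n and let π be a partition of an n-element set into nonempty parts whose sizes pairwise differ by at most one. If the total number of unordered pairs of distinct elements lying in a common part of π equals β_{n,k}, then π has exactly k parts. -/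
lemma Nat.choose_two_of_le_of_le_succ {a b : ℕ} (hab : a ≤ b) (hba : b ≤ a + 1) :
    b.choose 2 = a.choose 2 + (b - a) * a := by
  obtain rfl | rfl : b = a ∨ b = a + 1 := by omega
  · simp
  · simp [Nat.choose_succ_succ', add_comm]

lemma beta_eq (n : ℕ) {k : ℕ} (hk : 0 < k) :
    beta n k = k * (n / k).choose 2 + n % k * (n / k) := by
  obtain ⟨q, r, hr, rfl⟩ : ∃ q r, r < k ∧ n = k * q + r :=
    ⟨n / k, n % k, Nat.mod_lt n hk, (Nat.div_add_mod n k).symm⟩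
  have hdiv : (k * q + r) / k = q := by
    rw [Nat.mul_add_div hk, Nat.div_eq_of_lt hr, add_zero]
  have hmod : (k * q + r) % k = r := by
    rw [Nat.mul_add_mod, Nat.mod_eq_of_lt hr]
  rw [beta, ← Nat.choose_two_right, ← Nat.choose_two_right, hdiv, hmod]
  obtain rfl | hr0 := Nat.eq_zero_or_pos r
  · simp
  · have hceil : (k * q + r + k - 1) / k = q + 1 := by
      rw [show k * q + r + k - 1 = k * (q + 1) + (r - 1) by rw [Nat.mul_succ]; omega,
        Nat.mul_add_div hk, Nat.div_eq_of_lt (by omega)]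
    obtain ⟨d, rfl⟩ := Nat.exists_eq_add_of_le hr.le
    rw [hceil, Nat.choose_succ_succ', Nat.choose_one_right, Nat.add_sub_cancel_left]
    ring

lemma sum_range_mul_add_div {k : ℕ} (hk : 0 < k) (q : ℕ) {r : ℕ} (hr : r ≤ k) :
    ∑ i ∈ Finset.range (k * q + r), i / k = ∑ i ∈ Finset.range (k * q), i / k + r * q := by
  have hblock : ∀ j ∈ Finset.range r, (k * q + j) / k = q := fun j hj => by
    rw [Nat.mul_add_div hk, Nat.div_eq_of_lt (by simp at hj; omega), add_zero]
  rw [Finset.sum_range_add, Finset.sum_congr rfl hblock, Finset.sum_const, Finset.card_range,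
    smul_eq_mul]

lemma sum_range_mul_div {k : ℕ} (hk : 0 < k) (q : ℕ) :
    ∑ i ∈ Finset.range (k * q), i / k = k * q.choose 2 := by
  induction q with
  | zero => simp
  | succ q ih =>
    rw [Nat.mul_succ, sum_range_mul_add_div hk q le_rfl, ih, Nat.choose_succ_succ',
      Nat.choose_one_right]
    ring

/-- Adding the elements one by one, round-robin over the `k` parts, the `i`-th element
joins a part that already holds `i / k` elements. -/
lemma beta_eq_sum_range_div (n : ℕ) {k : ℕ} (hk : 0 < k) :
    beta n k = ∑ i ∈ Finset.range n, i / k := by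
  conv_rhs => rw [← Nat.div_add_mod n k]
  rw [sum_range_mul_add_div hk _ (Nat.mod_lt n hk).le, sum_range_mul_div hk, beta_eq n hk]

lemma beta_strictAntiOn (n : ℕ) : StrictAntiOn (beta n) (Set.Icc 1 n) := by
  rintro k ⟨hk, -⟩ k' ⟨hk', hk'n⟩ hkk'
  rw [beta_eq_sum_range_div n hk, beta_eq_sum_range_div n hk']
  refine Finset.sum_lt_sum (fun i _ => Nat.div_le_div_left hkk'.le hk) ⟨k, ?_, ?_⟩
  · simpa using hkk'.trans_le hk'n
  · rw [Nat.div_eq_of_lt hkk', Nat.div_self hk]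
    exact Nat.one_pos

lemma sum_choose_two_eq_beta {ι : Type*} [Fintype ι] (s : ι → ℕ)
    (hbal : ∀ i j, s i ≤ s j + 1) :
    ∑ i, (s i).choose 2 = beta (∑ i, s i) (Fintype.card ι) := by
  cases isEmpty_or_nonempty ι
  · simp [beta]
  obtain ⟨i₀, hmin⟩ := Finite.exists_min s
  set a := s i₀
  set t := ∑ i, (s i - a) with ht_def
  have hsum : ∑ i, s i = Fintype.card ι * a + t := by
    rw [ht_def, ← smul_eq_mul, ← Finset.card_univ, ← Finset.sum_const,
      ← Finset.sum_add_distrib]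
    exact Finset.sum_congr rfl fun i _ => by have := hmin i; omega
  have ht : t < Fintype.card ι := by
    rw [Finset.card_univ.symm, Finset.card_eq_sum_ones]
    refine Finset.sum_lt_sum (fun i _ => by have := hbal i i₀; omega)
      ⟨i₀, Finset.mem_univ _, by simp [a]⟩
  have hpos : 0 < Fintype.card ι := Fintype.card_pos
  rw [beta_eq _ hpos, hsum, Nat.mul_add_div hpos, Nat.div_eq_of_lt ht, add_zero, Nat.mul_add_mod,
    Nat.mod_eq_of_lt ht,
    Finset.sum_congr rfl fun i _ => Nat.choose_two_of_le_of_le_succ (hmin i) (hbal i i₀),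
    Finset.sum_add_distrib, Finset.sum_const, ← Finset.sum_mul, Finset.card_univ, smul_eq_mul]

/-- let `1 ≤ k ≤ n` and let `π` be a partition of an `n`-element set
into `m` nonempty parts whose sizes pairwise differ by at most one. If the number of
unordered pairs of distinct elements lying in a common part of `π` equals `β_{n,k}`,
then `π` has exactly `k` parts, i.e. `m = k`. -/
theorem stmt_13 {α : Type*} [DecidableEq α] (V : Finset α) (n k m : ℕ)
    (hn : V.card = n) (hk : 1 ≤ k) (hkn : k ≤ n)
    (P : Fin m → Finset α)
    (hne : ∀ c, (P c).Nonempty)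
    (hdisj : ∀ c c', c ≠ c' → Disjoint (P c) (P c'))
    (hcover : Finset.univ.biUnion P = V)
    (hbal : ∀ c c', (P c).card ≤ (P c').card + 1)
    (hbeta : ∑ c : Fin m, (P c).card.choose 2 = beta n k) :
    m = k := by
  have hsum : ∑ c, (P c).card = n := by
    rw [← hn, ← hcover, Finset.card_biUnion fun c _ c' _ h => hdisj c c' h]
  have hm : 1 ≤ m := Nat.pos_of_ne_zero <| by
    rintro rfl
    rw [Finset.univ_eq_empty, Finset.sum_empty] at hsum
    omega
  have hmn : m ≤ n := by
    calc m = ∑ _c : Fin m, 1 := by simp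
      _ ≤ ∑ c, (P c).card := Finset.sum_le_sum fun c _ => (hne c).card_pos
      _ = n := hsum
  have hedges : beta n m = beta n k := by
    simpa [hsum] using (sum_choose_two_eq_beta (fun c => (P c).card) hbal).symm.trans hbeta
  exact (beta_strictAntiOn n).injOn ⟨hm, hmn⟩ ⟨hk, hkn⟩ hedges
end

section
/- Let t_1, …, t_k be nonnegative integers with Σ_{i=1}^k t_i = m, suppose at least two of the t_i are positive, and suppose Σ_{i=1}^k binom(t_i, 2) = (m−1)(m−2)/2. Then there exists an index i with t_i = m − 1, and consequently Σ_{j ≠ i} t_j = 1. -/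
/-- if `t_1, …, t_k` are nonnegative integers summing to `m`, at least
two of them are positive, and `Σ_i binom(t_i, 2) = (m−1)(m−2)/2`, then some `t_i`
equals `m − 1`, and consequently the remaining entries sum to `1`. -/
theorem stmt_15 (k m : ℕ) (t : Fin k → ℕ)
    (hsum : ∑ i, t i = m)
    (htwo : ∃ i j : Fin k, i ≠ j ∧ 0 < t i ∧ 0 < t j)
    (heq : ∑ i, (t i).choose 2 = (m - 1) * (m - 2) / 2) :
    ∃ i : Fin k, t i = m - 1 ∧ ∑ j ∈ Finset.univ.erase i, t j = 1 := by
  obtain ⟨a, b, hab, ha, hb⟩ := htwo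
  have hpair : ∀ x y : Fin k, x ≠ y → t x + t y ≤ m := by
    intro x y hxy
    rw [← hsum]
    calc t x + t y = ∑ z ∈ ({x, y} : Finset (Fin k)), t z := (Finset.sum_pair hxy).symm
      _ ≤ ∑ z, t z := Finset.sum_le_sum_of_subset (Finset.subset_univ _)
  have hm2 : 2 ≤ m := by have := hpair a b hab; omega
  have hle : ∀ l, t l ≤ m - 1 := by
    intro l
    by_cases h : l = a
    · subst h; have := hpair l b hab; omega
    · have := hpair a l (Ne.symm h); omega
  have hchoose : ∀ n : ℕ, n * (n - 1) = 2 * n.choose 2 := by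
    intro n
    rcases n with _ | n
    · simp
    · rw [Nat.choose_two_right]
      have hev : 2 ∣ (n + 1) * (n + 1 - 1) := by
        simp only [Nat.add_sub_cancel]
        rcases Nat.even_or_odd n with h | h
        · exact Dvd.dvd.mul_left h.two_dvd _
        · exact Dvd.dvd.mul_right (Odd.add_one h).two_dvd _
      rw [Nat.mul_div_cancel' hev]
  have hdouble : ∑ i, t i * (t i - 1) = (m - 1) * (m - 2) := by
    have h1 : ∑ i, t i * (t i - 1) = 2 * ∑ i, (t i).choose 2 := by
      rw [Finset.mul_sum]; exact Finset.sum_congr rfl fun i _ => hchoose (t i)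
    rw [h1, heq]
    have hev : 2 ∣ (m - 1) * (m - 2) := by
      rcases Nat.even_or_odd (m - 1) with h | h
      · exact Dvd.dvd.mul_right h.two_dvd _
      · have : Even (m - 2) := by
          rcases h with ⟨c, hc⟩; exact ⟨c, by omega⟩
        exact Dvd.dvd.mul_left this.two_dvd _
    rw [Nat.mul_div_cancel' hev]
  -- find index with t i = m - 1
  have hex : ∃ i : Fin k, t i = m - 1 := by
    by_contra h
    push_neg at h
    have hle2 : ∀ l, t l ≤ m - 2 := by
      intro l; have := hle l; have := h l; omega
    rcases Nat.lt_or_ge m 3 with hm3 | hm3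
    · -- m = 2, all entries zero, contradiction with ha
      have := hle2 a; omega
    · have hbound : ∑ i, t i * (t i - 1) ≤ ∑ i, t i * (m - 3) := by
        apply Finset.sum_le_sum
        intro i _
        exact Nat.mul_le_mul_left _ (by have := hle2 i; omega)
      rw [← Finset.sum_mul, hsum] at hbound
      rw [hdouble] at hbound
      obtain ⟨n, rfl⟩ : ∃ n, m = n + 3 := ⟨m - 3, by omega⟩
      simp only [Nat.add_sub_cancel, show n + 3 - 1 = n + 2 from rfl,
        show n + 3 - 2 = n + 1 from rfl] at hbound
      nlinarith
  obtain ⟨i, hi⟩ := hex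
  refine ⟨i, hi, ?_⟩
  have := Finset.add_sum_erase Finset.univ t (Finset.mem_univ i)
  omega
end
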